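/- Let t be a positive integer, let 1 ≤ p ≤ 2t, let k ≥ l > 1, and let v ≠ u be vertices with l ≤ l_p if v ∈ B and l ≤ l_c if v ∉ B. Suppose that for every vertex w there is a subfamily F̂_{k−1,l−1,p−1}^{vw} ⊆ F_{k−1,l−1,p−1}^{vw} that is (2t−(p−1))-representative for F_{k−1,l−1,p−1}^{vw}. Then the family N = ⋃_{w ∈ V, w ≠ v, (w,u) ∈ A} F̂_{k−1,l−1,p−1}^{vw} ⊎ {u} is a subfamily of F_{k,l,p}^{vu} that is (2t−p)-representative for F_{k,l,p}^{vu}. -/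

import Mathlib

/-- An element of a path-cycle packing: a list of vertices together with a flag
telling whether it is a cycle (`true`) or a path (`false`). -/
structure PCElem (V : Type*) where
  verts : List V
  isCycle : Bool

/-- A valid element w.r.t. the arc relation `A`: the vertices are distinct,
consecutive vertices are joined by arcs, there are at least two vertices
(so paths have length ≥ 1 and cycles have length ≥ 2), and for a cycle the
last vertex is joined back to the first. -/
def ValidElem {V : Type*} (A : V → V → Prop) (e : PCElem V) : Prop :=
  e.verts.Nodup ∧ e.verts.Chain' A ∧ 2 ≤ e.verts.length ∧
    (e.isCycle = true → ∀ h : e.verts ≠ [], A (e.verts.getLast h) (e.verts.head h))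

/-- The length (number of arcs) of an element: a cycle on `k` vertices has length `k`,
a path on `k` vertices has length `k - 1`. -/
def elemLen {V : Type*} (e : PCElem V) : ℕ :=
  if e.isCycle then e.verts.length else e.verts.length - 1

/-- The vertex set of an element. -/
def elemVerts {V : Type*} [DecidableEq V] (e : PCElem V) : Finset V :=
  e.verts.toFinset

/-- A path-cycle packing: a finite set of valid, pairwise vertex-disjoint
paths and cycles. -/
def IsPacking {V : Type*} [DecidableEq V] (A : V → V → Prop)
    (D : Finset (PCElem V)) : Prop :=
  (∀ e ∈ D, ValidElem A e) ∧
    (D : Set (PCElem V)).Pairwise fun e f => Disjoint (elemVerts e) (elemVerts f)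

/-- `c(D)`: the total length of a packing. -/
def packLen {V : Type*} (D : Finset (PCElem V)) : ℕ :=
  ∑ e ∈ D, elemLen e

/-- `V(D)`: the set of vertices appearing in a packing. -/
def packVerts {V : Type*} [DecidableEq V] (D : Finset (PCElem V)) : Finset V :=
  D.biUnion elemVerts

/-- A feasible path: starts at an altruistic vertex of `B` and has length at most `lp`. -/
def FeasPath {V : Type*} (B : Set V) (lp : ℕ) (e : PCElem V) : Prop :=
  e.isCycle = false ∧ (∃ b ∈ B, e.verts.head? = some b) ∧ e.verts.length - 1 ≤ lp

/-- A feasible cycle: contains no vertex of `B` and has length at most `lc`. -/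
def FeasCycle {V : Type*} (B : Set V) (lc : ℕ) (e : PCElem V) : Prop :=
  e.isCycle = true ∧ (∀ w ∈ e.verts, w ∉ B) ∧ e.verts.length ≤ lc

/-- A feasible element: a feasible path or a feasible cycle. -/
def FeasElem {V : Type*} (B : Set V) (lp lc : ℕ) (e : PCElem V) : Prop :=
  FeasPath B lp e ∨ FeasCycle B lc e

/-- A feasible path-cycle packing. -/
def FeasPacking {V : Type*} [DecidableEq V] (A : V → V → Prop) (B : Set V)
    (lp lc : ℕ) (D : Finset (PCElem V)) : Prop :=
  IsPacking A D ∧ ∀ e ∈ D, FeasElem B lp lc e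

/-- A semi-feasible element: a feasible path, a feasible cycle, or a path of
length at most `lc` containing no vertex of `B`. -/
def SemiElem {V : Type*} (B : Set V) (lp lc : ℕ) (e : PCElem V) : Prop :=
  FeasElem B lp lc e ∨
    (e.isCycle = false ∧ (∀ w ∈ e.verts, w ∉ B) ∧ e.verts.length - 1 ≤ lc)

/-- `e` is a `D_l^{vu}`: a path of length `l` from `v` to `u` when `v ≠ u`, and a
cycle of length `l` through `v` when `v = u`. -/
def IsDlvu {V : Type*} [DecidableEq V] (v u : V) (l : ℕ) (e : PCElem V) : Prop :=
  if v = u then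
    e.isCycle = true ∧ v ∈ e.verts ∧ e.verts.length = l
  else
    e.isCycle = false ∧ e.verts.head? = some v ∧ e.verts.getLast? = some u ∧
      e.verts.length = l + 1

/-- `F_{k,l}^{vu}`: the collection of vertex sets `V(D)` over all semi-feasible
packings `D = P ∪ C ∪ {D_l^{vu}}` with `c(D) = k`; the distinguished element
`D_l^{vu}` is semi-feasible and every other element is feasible. -/
def FF {V : Type*} [DecidableEq V] (A : V → V → Prop) (B : Set V) (lp lc : ℕ)
    (k l : ℕ) (v u : V) : Set (Finset V) :=
  { S | ∃ (D : Finset (PCElem V)) (e : PCElem V),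
      IsPacking A D ∧ e ∈ D ∧ IsDlvu v u l e ∧ SemiElem B lp lc e ∧
      (∀ f ∈ D, f ≠ e → FeasElem B lp lc f) ∧ packLen D = k ∧ packVerts D = S }

/-- `F ⊎ T = { X ∪ T : X ∈ F, X ∩ T = ∅ }` for a collection of finite sets. -/
def uplusS {V : Type*} [DecidableEq V] (F : Set (Finset V)) (T : Finset V) :
    Set (Finset V) :=
  { Z | ∃ X ∈ F, Disjoint X T ∧ Z = X ∪ T }

/-- `F_{k,l,p}^{vu}`: the members of `F_{k,l}^{vu}` of cardinality `p`. -/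
def FFp {V : Type*} [DecidableEq V] (A : V → V → Prop) (B : Set V) (lp lc : ℕ)
    (k l p : ℕ) (v u : V) : Set (Finset V) :=
  { S | S ∈ FF A B lp lc k l v u ∧ S.card = p }

/-- `Shat` is a `q`-representative subfamily of the family `S` of finite sets:
`Shat ⊆ S` and for every set `Y` of size at most `q`, if some `X ∈ S` is disjoint
from `Y`, then some `X̂ ∈ Shat` is disjoint from `Y`. -/
def IsRepS {V : Type*} [DecidableEq V] (q : ℕ) (Shat S : Set (Finset V)) : Prop :=
  Shat ⊆ S ∧ ∀ Y : Finset V, Y.card ≤ q →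
    (∃ X ∈ S, Disjoint X Y) → ∃ Xhat ∈ Shat, Disjoint Xhat Y

/-! For `v ≠ u` the distinguished element of a packing in `F_{k,l,p}^{vu}` is a path from `v`
to `u` whose last arc is some `(w, u)` with `w ≠ v`; deleting `u` leaves a packing in
`F_{k-1,l-1,p-1}^{vw}`. Conversely, appending `u` to the distinguished path of a packing in
`F_{k-1,l-1,p-1}^{vw}` that avoids `u` gives a packing in `F_{k,l,p}^{vu}`; the bounds on `l`
and `u ∉ B` keep the longer path semi-feasible. To find a member of the new family avoiding
`Y`, apply the representativity of `F̂^{vw}` to `Y ∪ {u}`, of size at most `2t - (p - 1)`. -/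

instance {V : Type*} [DecidableEq V] : DecidableEq (PCElem V) :=
  fun a b => decidable_of_iff (a.verts = b.verts ∧ a.isCycle = b.isCycle)
    (by cases a; cases b; simp)

theorem List.Nodup.ne_of_head?_of_getLast? {α : Type*} {l : List α} {a b : α}
    (hn : l.Nodup) (hl : 2 ≤ l.length) (ha : l.head? = some a) (hb : l.getLast? = some b) :
    a ≠ b := by
  match l, hl with
  | x :: y :: t, _ =>
    rintro rfl
    simp only [List.head?_cons, Option.some.injEq] at ha
    subst ha
    rw [List.getLast?_cons_cons] at hb
    exact (List.nodup_cons.1 hn).1 (List.mem_of_getLast? hb)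

section Packing

variable {V : Type*} [DecidableEq V] {A : V → V → Prop} {B : Set V} {lp lc : ℕ}

lemma ValidElem.elemVerts_nonempty {e : PCElem V} (he : ValidElem A e) :
    (elemVerts e).Nonempty := by
  obtain ⟨x, hx⟩ := List.exists_mem_of_length_pos (lt_of_lt_of_le two_pos he.2.2.1)
  exact ⟨x, List.mem_toFinset.2 hx⟩

lemma packVerts_insert (e : PCElem V) (D : Finset (PCElem V)) :
    packVerts (insert e D) = elemVerts e ∪ packVerts D :=
  Finset.biUnion_insert

lemma packLen_insert {e : PCElem V} {D : Finset (PCElem V)} (he : e ∉ D) :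
    packLen (insert e D) = elemLen e + packLen D :=
  Finset.sum_insert he

lemma IsPacking.disjoint_packVerts_erase {D : Finset (PCElem V)} {e : PCElem V}
    (hD : IsPacking A D) (he : e ∈ D) : Disjoint (elemVerts e) (packVerts (D.erase e)) :=
  (Finset.disjoint_biUnion_right _ _ _).2 fun _ hf =>
    hD.2 he (Finset.mem_of_mem_erase hf) (Finset.ne_of_mem_erase hf).symm

lemma IsPacking.insert {D : Finset (PCElem V)} {e : PCElem V} (hD : IsPacking A D)
    (he : ValidElem A e) (hdisj : Disjoint (elemVerts e) (packVerts D)) :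
    IsPacking A (insert e D) := by
  refine ⟨(Finset.forall_mem_insert _ _ _).2 ⟨he, hD.1⟩, ?_⟩
  rw [Finset.coe_insert, Set.pairwise_insert]
  refine ⟨hD.2, fun f hf _ => ?_⟩
  have h := hdisj.mono_right (Finset.subset_biUnion_of_mem elemVerts hf)
  exact ⟨h, h.symm⟩

lemma mem_FF_iff {k l : ℕ} {v u : V} {S : Finset V} :
    S ∈ FF A B lp lc k l v u ↔
      ∃ (e : PCElem V) (R : Finset (PCElem V)), IsPacking A R ∧
        (∀ f ∈ R, FeasElem B lp lc f) ∧ ValidElem A e ∧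
        Disjoint (elemVerts e) (packVerts R) ∧ IsDlvu v u l e ∧ SemiElem B lp lc e ∧
        elemLen e + packLen R = k ∧ elemVerts e ∪ packVerts R = S := by
  constructor
  · rintro ⟨D, e, hD, he, hdl, hs, hfeas, rfl, rfl⟩
    refine ⟨e, D.erase e, ⟨fun f hf => hD.1 f (Finset.mem_of_mem_erase hf),
      hD.2.mono fun f hf => Finset.mem_of_mem_erase hf⟩,
      fun f hf => hfeas f (Finset.mem_of_mem_erase hf) (Finset.ne_of_mem_erase hf),
      hD.1 e he, hD.disjoint_packVerts_erase he, hdl, hs, ?_, ?_⟩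
    · rw [← packLen_insert (Finset.notMem_erase e D), Finset.insert_erase he]
    · rw [← packVerts_insert, Finset.insert_erase he]
  · rintro ⟨e, R, hR, hfeas, he, hdisj, hdl, hs, rfl, rfl⟩
    have heR : e ∉ R := fun h => by
      obtain ⟨x, hx⟩ := he.elemVerts_nonempty
      exact Finset.disjoint_left.1 hdisj hx (Finset.subset_biUnion_of_mem elemVerts h hx)
    refine ⟨insert e R, e, hR.insert he hdisj, Finset.mem_insert_self e R, hdl, hs,
      fun f hf hfe => hfeas f ((Finset.mem_insert.1 hf).resolve_left hfe),
      packLen_insert heR, packVerts_insert e R⟩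

end Packing

section Paths

variable {V : Type*} {A : V → V → Prop} {B : Set V} {lp lc : ℕ}

lemma validElem_path_iff {L : List V} :
    ValidElem A ⟨L, false⟩ ↔ L.Nodup ∧ L.IsChain A ∧ 2 ≤ L.length :=
  ⟨fun h => ⟨h.1, h.2.1, h.2.2.1⟩, fun h => ⟨h.1, h.2.1, h.2.2, nofun⟩⟩

lemma validElem_append_singleton_iff {M : List V} {u : V} (hM : 2 ≤ M.length) :
    ValidElem A ⟨M ++ [u], false⟩ ↔
      ValidElem A ⟨M, false⟩ ∧ u ∉ M ∧ ∀ w ∈ M.getLast?, A w u := by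
  simp only [validElem_path_iff, List.nodup_append, List.isChain_append,
    List.length_append, List.nodup_singleton, List.isChain_singleton, List.mem_singleton,
    List.head?_cons, Option.mem_some_iff]
  grind

lemma SemiElem.of_append {M N : List V} (h : SemiElem B lp lc ⟨M ++ N, false⟩)
    (hM : M ≠ []) : SemiElem B lp lc ⟨M, false⟩ := by
  have hlen : M.length ≤ (M ++ N).length := by simp
  rcases h with (⟨-, ⟨b, hb, hhead⟩, hle⟩ | ⟨hc, -⟩) | ⟨-, hB, hle⟩
  · rw [List.head?_append_of_ne_nil _ hM] at hhead
    exact .inl (.inl ⟨rfl, ⟨b, hb, hhead⟩, by simp only at hle ⊢; omega⟩)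
  · exact absurd hc Bool.false_ne_true
  · refine .inr ⟨rfl, fun w hw => hB w (List.mem_append_left N hw), ?_⟩
    simp only at hle ⊢
    omega

lemma SemiElem.append_singleton {L : List V} {v u : V} (h : SemiElem B lp lc ⟨L, false⟩)
    (hv : L.head? = some v) (hu : u ∉ B) (hp : v ∈ B → L.length ≤ lp)
    (hc : v ∉ B → L.length ≤ lc) : SemiElem B lp lc ⟨L ++ [u], false⟩ := by
  have hL : L ≠ [] := by rintro rfl; simp at hv
  have hlen : (L ++ [u]).length - 1 = L.length := by simp
  by_cases hvB : v ∈ B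
  · refine .inl (.inl ⟨rfl, ⟨v, hvB, ?_⟩, by simp only [hlen]; exact hp hvB⟩)
    rwa [List.head?_append_of_ne_nil _ hL]
  · rcases h with (⟨-, ⟨b, hb, hhead⟩, -⟩ | ⟨hc, -⟩) | ⟨-, hB, -⟩
    · rw [hv, Option.some.injEq] at hhead
      exact absurd (hhead ▸ hb) hvB
    · exact absurd hc Bool.false_ne_true
    · refine .inr ⟨rfl, fun w hw => ?_, by simp only [hlen]; exact hc hvB⟩
      rcases List.mem_append.1 hw with hw | hw
      · exact hB w hw
      · rwa [List.mem_singleton.1 hw]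

end Paths

section Recurrence

variable {V : Type*} [DecidableEq V] {A : V → V → Prop} {B : Set V} {lp lc : ℕ}
  {k l p : ℕ} {v u w : V} {X : Finset V}

lemma union_singleton_mem_FFp (hvu : v ≠ u) (hwv : w ≠ v) (hwu : A w u) (huB : u ∉ B)
    (hl : 1 < l) (hp : 1 ≤ p) (hlp : v ∈ B → l ≤ lp) (hlc : v ∉ B → l ≤ lc)
    (hX : X ∈ FFp A B lp lc (k - 1) (l - 1) (p - 1) v w) (hu : u ∉ X) :
    X ∪ {u} ∈ FFp A B lp lc k l p v u := by
  obtain ⟨hX, hcard⟩ := hX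
  obtain ⟨⟨L, c⟩, R, hR, hRfeas, hval, hdisj, hdl, hs, hlen, rfl⟩ := mem_FF_iff.1 hX
  simp only [IsDlvu, if_neg hwv.symm] at hdl
  obtain ⟨rfl, hhead, hlast, hlenL⟩ := hdl
  have hL : L.length = l := by omega
  have huL : u ∉ L := fun h => hu (Finset.mem_union_left _ (List.mem_toFinset.2 h))
  have huR : u ∉ packVerts R := fun h => hu (Finset.mem_union_right _ h)
  have hverts : elemVerts ⟨L ++ [u], false⟩ = insert u (elemVerts ⟨L, false⟩) := by
    simp [elemVerts, List.toFinset_append]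
  refine ⟨mem_FF_iff.2 ⟨⟨L ++ [u], false⟩, R, hR, hRfeas,
    (validElem_append_singleton_iff (by omega)).2 ⟨hval, huL, by simp [hlast, hwu]⟩,
    ?_, ?_, hs.append_singleton hhead huB (hL ▸ hlp) (hL ▸ hlc), ?_, ?_⟩, ?_⟩
  · rw [hverts, Finset.disjoint_insert_left]
    exact ⟨huR, hdisj⟩
  · rw [IsDlvu, if_neg hvu]
    exact ⟨rfl, by simp [hhead], List.getLast?_concat, by simp [hL]⟩
  · simp only [elemLen, Bool.false_eq_true, if_false, List.length_append,
      List.length_singleton] at hlen ⊢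
    omega
  · rw [hverts, Finset.insert_union, Finset.union_comm _ {u}, Finset.singleton_union]
  · rw [Finset.card_union_of_disjoint (Finset.disjoint_singleton_right.2 hu), hcard]
    simp only [Finset.card_singleton]
    omega

lemma exists_erase_mem_FFp (hvu : v ≠ u) (hl : 1 < l)
    (hX : X ∈ FFp A B lp lc k l p v u) :
    ∃ w, w ≠ v ∧ A w u ∧ u ∈ X ∧ X.erase u ∈ FFp A B lp lc (k - 1) (l - 1) (p - 1) v w := by
  obtain ⟨hX, rfl⟩ := hX
  obtain ⟨⟨L, c⟩, R, hR, hRfeas, hval, hdisj, hdl, hs, rfl, rfl⟩ := mem_FF_iff.1 hX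
  simp only [IsDlvu, if_neg hvu] at hdl
  obtain ⟨rfl, hhead, hlast, hlenL⟩ := hdl
  obtain ⟨M, rfl⟩ := List.getLast?_eq_some_iff.1 hlast
  have hM : M.length = l := by simpa using hlenL
  have hMne : M ≠ [] := List.ne_nil_of_length_pos (by omega)
  obtain ⟨w, hw⟩ := Option.isSome_iff_exists.1 (List.getLast?_isSome.2 hMne)
  rw [List.head?_append_of_ne_nil _ hMne] at hhead
  obtain ⟨hvalM, huM, hwu⟩ := (validElem_append_singleton_iff (by omega)).1 hval
  have hwv : w ≠ v := (hvalM.1.ne_of_head?_of_getLast? hvalM.2.2.1 hhead hw).symm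
  have hverts : elemVerts ⟨M ++ [u], false⟩ = insert u (elemVerts ⟨M, false⟩) := by
    simp [elemVerts, List.toFinset_append]
  have huM' : u ∉ elemVerts ⟨M, false⟩ := fun h => huM (List.mem_toFinset.1 h)
  rw [hverts, Finset.disjoint_insert_left] at hdisj
  refine ⟨w, hwv, hwu w hw, by simp [hverts], mem_FF_iff.2 ⟨⟨M, false⟩, R, hR, hRfeas,
    hvalM, hdisj.2, ?_, hs.of_append hMne, ?_, ?_⟩, ?_⟩
  · rw [IsDlvu, if_neg hwv.symm]
    exact ⟨rfl, hhead, hw, hM.trans (by omega)⟩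
  · simp only [elemLen, Bool.false_eq_true, if_false, List.length_append,
      List.length_singleton]
    omega
  · rw [hverts, Finset.insert_union, Finset.erase_insert (by simp [huM', hdisj.1])]
  · rw [hverts, Finset.insert_union, Finset.erase_insert (by simp [huM', hdisj.1]),
      Finset.card_insert_of_notMem (by simp [huM', hdisj.1])]
    simp

end Recurrence

lemma IsRepS.iUnion_uplusS_singleton {V ι : Type*} [DecidableEq V] {P : ι → Prop} {q : ℕ}
    {u : V} {S : Set (Finset V)} {T That : ι → Set (Finset V)}
    (hrep : ∀ i, P i → IsRepS (q + 1) (That i) (T i))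
    (hext : ∀ i, P i → uplusS (T i) {u} ⊆ S)
    (hsplit : ∀ X ∈ S, ∃ i, P i ∧ u ∈ X ∧ X.erase u ∈ T i) :
    IsRepS q (⋃ (i) (_ : P i), uplusS (That i) {u}) S := by
  constructor
  · simp only [Set.iUnion_subset_iff]
    rintro i hi _ ⟨X, hX, hXu, rfl⟩
    exact hext i hi ⟨X, (hrep i hi).1 hX, hXu, rfl⟩
  · rintro Y hY ⟨X, hX, hXY⟩
    obtain ⟨i, hi, huX, hXi⟩ := hsplit X hX
    have huY : u ∉ Y := Finset.disjoint_left.1 hXY huX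
    obtain ⟨Xh, hXh, hXhY⟩ := (hrep i hi).2 (insert u Y)
      ((Finset.card_insert_le u Y).trans (by omega))
      ⟨X.erase u, hXi, Finset.disjoint_insert_right.2
        ⟨Finset.notMem_erase u X, hXY.mono_left (Finset.erase_subset u X)⟩⟩
    rw [Finset.disjoint_insert_right] at hXhY
    refine ⟨Xh ∪ {u}, Set.mem_biUnion hi ⟨Xh, hXh, ?_, rfl⟩, ?_⟩
    · exact Finset.disjoint_singleton_right.2 hXhY.1
    · exact Finset.disjoint_union_left.2 ⟨hXhY.2, Finset.disjoint_singleton_left.2 huY⟩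

theorem rep_recurrence_extend_path_general {V : Type*} [DecidableEq V]
    (A : V → V → Prop) (B : Set V) (lp lc : ℕ)
    (hB : ∀ v u, A v u → u ∉ B)
    (t p k l : ℕ) (v u : V)
    (hp1 : 1 ≤ p) (hp2 : p ≤ 2 * t)
    (hl : 1 < l) (hvu : v ≠ u)
    (h1 : v ∈ B → l ≤ lp) (h2 : v ∉ B → l ≤ lc)
    (Fhat : V → Set (Finset V))
    (hrep : ∀ w : V, IsRepS (2 * t - (p - 1)) (Fhat w)
      (FFp A B lp lc (k - 1) (l - 1) (p - 1) v w)) :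
    IsRepS (2 * t - p)
      (⋃ (w : V) (_ : w ≠ v) (_ : A w u), uplusS (Fhat w) {u})
      (FFp A B lp lc k l p v u) := by
  have hq : 2 * t - (p - 1) = 2 * t - p + 1 := by omega
  simpa only [Set.iUnion_and] using IsRepS.iUnion_uplusS_singleton
    (P := fun w => w ≠ v ∧ A w u) (fun w _ => hq ▸ hrep w)
    (fun w ⟨hwv, hwu⟩ => by
      rintro _ ⟨X, hX, hXu, rfl⟩
      exact union_singleton_mem_FFp hvu hwv hwu (hB w u hwu) hl hp1 h1 h2 hX
        (Finset.disjoint_singleton_right.1 hXu))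
    (fun X hX => by
      obtain ⟨w, hwv, hwu, huX, hXw⟩ := exists_erase_mem_FFp hvu hl hX
      exact ⟨w, ⟨hwv, hwu⟩, huX, hXw⟩)

/-- (Correctness of the compression step, Case (iii)) If for every `w` the family
`F̂_{k-1,l-1,p-1}^{vw}` is `(2t-(p-1))`-representative for `F_{k-1,l-1,p-1}^{vw}`,
then `⋃_{w ≠ v, (w,u) ∈ A} F̂_{k-1,l-1,p-1}^{vw} ⊎ {u}` is a subfamily of
`F_{k,l,p}^{vu}` that is `(2t-p)`-representative for it. -/
theorem rep_recurrence_extend_path {V : Type*} [Fintype V] [DecidableEq V]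
    (A : V → V → Prop) (B : Set V) (lp lc : ℕ)
    (hloop : ∀ v, ¬ A v v) (hB : ∀ v u, A v u → u ∉ B)
    (t p k l : ℕ) (v u : V)
    (ht : 0 < t) (hp1 : 1 ≤ p) (hp2 : p ≤ 2 * t)
    (hkl : l ≤ k) (hl : 1 < l) (hvu : v ≠ u)
    (h1 : v ∈ B → l ≤ lp) (h2 : v ∉ B → l ≤ lc)
    (Fhat : V → Set (Finset V))
    (hrep : ∀ w : V, IsRepS (2 * t - (p - 1)) (Fhat w)
      (FFp A B lp lc (k - 1) (l - 1) (p - 1) v w)) :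
    IsRepS (2 * t - p)
      (⋃ (w : V) (_ : w ≠ v) (_ : A w u), uplusS (Fhat w) {u})
      (FFp A B lp lc k l p v u) :=
  rep_recurrence_extend_path_general A B lp lc hB t p k l v u hp1 hp2 hl hvu h1 h2 Fhat hrep
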